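/- arXiv:2403.12951 — 2 statements merged into one kernel-verified Lean document; each statement's English description precedes it below -/
import Mathlib

section
/- There do not exist positive real numbers a1, a2, ..., a10 satisfying the following system of equations (written with denominators cleared, which is equivalent to the original system since all variables are positive): (1) a1·a2 = a2 + a3 + a1·a4; (2) a2 = a4; (3) a1·a3 = a2 + a3; (4) a4·a5 = a3·a6 + a4·a7; (5) a1·a3·a5² = a1·a3·a6 + (a1·a4 + (a2 + a3)·a5)·a7; (6) a1·a3·a5·a7²·a8 = a1·a3·a5·a6·a8 + (a1·a3·a6² + (a1·a4 + (a2 + a3)·a5)·a6·a7)·a9 + (a1·a3·a6·a7 + (a1·a4 + (a2 + a3)·a5)·a7²)·a10; (7) a8 = a10; (8) a1·a3·a5·a7·a9 = a1·a3·a5·a8 + (a1·a3·a6 + (a1·a4 + (a2 + a3)·a5)·a7)·a9; (9) a10 = a9. -/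
/-- There is no positive real solution `(a1, …, a10)` of the system of equations
obtained from the fixed-point equations of the Legendrian loop `Σ₁` acting on the
positive real part of the sheaf moduli of `Λ(3,6)` (denominators cleared). -/
theorem no_positive_fixed_point_T36 :
    ¬ ∃ a1 a2 a3 a4 a5 a6 a7 a8 a9 a10 : ℝ,
      (0 < a1 ∧ 0 < a2 ∧ 0 < a3 ∧ 0 < a4 ∧ 0 < a5 ∧
       0 < a6 ∧ 0 < a7 ∧ 0 < a8 ∧ 0 < a9 ∧ 0 < a10) ∧
      a1 * a2 = a2 + a3 + a1 * a4 ∧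
      a2 = a4 ∧
      a1 * a3 = a2 + a3 ∧
      a4 * a5 = a3 * a6 + a4 * a7 ∧
      a1 * a3 * a5 ^ 2 = a1 * a3 * a6 + (a1 * a4 + (a2 + a3) * a5) * a7 ∧
      a1 * a3 * a5 * a7 ^ 2 * a8 =
        a1 * a3 * a5 * a6 * a8 +
          (a1 * a3 * a6 ^ 2 + (a1 * a4 + (a2 + a3) * a5) * a6 * a7) * a9 +
          (a1 * a3 * a6 * a7 + (a1 * a4 + (a2 + a3) * a5) * a7 ^ 2) * a10 ∧
      a8 = a10 ∧
      a1 * a3 * a5 * a7 * a9 =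
        a1 * a3 * a5 * a8 + (a1 * a3 * a6 + (a1 * a4 + (a2 + a3) * a5) * a7) * a9 ∧
      a10 = a9 := by
  rintro ⟨a1, a2, a3, a4, a5, a6, a7, a8, a9, a10,
    ⟨h1, h2, h3, h4, _, _, _, _, _, _⟩, e1, e2, _⟩
  subst e2
  nlinarith
end

section
/- Let G be a finite group acting on a finite index set I, and let b : I × I → ℤ satisfy b(g•i, g•j) = b(i, j) for all g ∈ G and all i, j ∈ I, and be skew-symmetric, i.e. b(j, i) = −b(i, j) for all i, j. Then for any two G-orbits O, O' ⊆ I and any representatives i₀ ∈ O, j₀ ∈ O', one has (Σ_{i ∈ O} b(i, j₀)) · |O'| = −(Σ_{j ∈ O'} b(j, i₀)) · |O|. Consequently the folded matrix B^G is skew-symmetrizable: B^G · D is skew-symmetric, where D is the diagonal matrix whose entry at an orbit is the size of that orbit. -/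
open MulAction in
private lemma sum_orbit_smul {G I : Type*} [Group G] [Fintype I] [MulAction G I]
    (f : I → ℤ) (g : G) (j₀ : I) :
    ∑ j ∈ (orbit G j₀).toFinite.toFinset, f (g • j) =
      ∑ j ∈ (orbit G j₀).toFinite.toFinset, f j := by
  apply Finset.sum_nbij' (fun j => g • j) (fun j => g⁻¹ • j)
  · intro a ha
    simp only [Set.Finite.mem_toFinset] at ha ⊢
    rw [← MulAction.smul_orbit g j₀]
    exact ⟨a, ha, rfl⟩
  · intro a ha
    simp only [Set.Finite.mem_toFinset] at ha ⊢
    obtain ⟨h, rfl⟩ := ha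
    exact ⟨g⁻¹ * h, by simp [mul_smul]⟩
  · intro a _; simp
  · intro a _; simp
  · intro a _; rfl

open MulAction in
/-- If `b : I × I → ℤ` is invariant under the action of a finite group `G` on a
finite index set `I` and skew-symmetric, then for any two `G`-orbits `O = orbit G i₀`
and `O' = orbit G j₀` one has
`(∑ i ∈ O, b (i, j₀)) * |O'| = -(∑ j ∈ O', b (j, i₀)) * |O|`.
Consequently the folded matrix `B^G` is skew-symmetrizable: multiplying on the right by
the diagonal matrix of orbit sizes yields a skew-symmetric matrix. -/
theorem folded_matrix_skew_symmetrizable {G I : Type*} [Group G] [Finite G] [Fintype I]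
    [MulAction G I] (b : I × I → ℤ)
    (hb : ∀ (g : G) (i j : I), b (g • i, g • j) = b (i, j))
    (hskew : ∀ i j : I, b (j, i) = - b (i, j))
    (i₀ j₀ : I) :
    (∑ i ∈ (orbit G i₀).toFinite.toFinset, b (i, j₀)) *
        ((orbit G j₀).toFinite.toFinset.card : ℤ) =
      -(∑ j ∈ (orbit G j₀).toFinite.toFinset, b (j, i₀)) *
        ((orbit G i₀).toFinite.toFinset.card : ℤ) := by
  set O := (orbit G i₀).toFinite.toFinset with hO
  set O' := (orbit G j₀).toFinite.toFinset with hO'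
  -- inner sums are constant along the orbit
  have hrow : ∀ i ∈ O, ∑ j ∈ O', b (i, j) = ∑ j ∈ O', b (i₀, j) := by
    intro i hi
    rw [hO, Set.Finite.mem_toFinset] at hi
    obtain ⟨g, rfl⟩ := hi
    calc ∑ j ∈ O', b (g • i₀, j) = ∑ j ∈ O', b (g • i₀, g • j) :=
          (sum_orbit_smul (fun j => b (g • i₀, j)) g j₀).symm
      _ = ∑ j ∈ O', b (i₀, j) := by
          exact Finset.sum_congr rfl fun j _ => hb g i₀ j
  have hcol : ∀ j ∈ O', ∑ i ∈ O, b (i, j) = ∑ i ∈ O, b (i, j₀) := by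
    intro j hj
    rw [hO', Set.Finite.mem_toFinset] at hj
    obtain ⟨g, rfl⟩ := hj
    calc ∑ i ∈ O, b (i, g • j₀) = ∑ i ∈ O, b (g • i, g • j₀) :=
          (sum_orbit_smul (fun i => b (i, g • j₀)) g i₀).symm
      _ = ∑ i ∈ O, b (i, j₀) := by
          exact Finset.sum_congr rfl fun i _ => hb g i j₀
  have h1 : ∑ i ∈ O, ∑ j ∈ O', b (i, j) = (O.card : ℤ) * ∑ j ∈ O', b (i₀, j) := by
    rw [Finset.sum_congr rfl hrow, Finset.sum_const, nsmul_eq_mul]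
  have h2 : ∑ i ∈ O, ∑ j ∈ O', b (i, j) = (O'.card : ℤ) * ∑ i ∈ O, b (i, j₀) := by
    rw [Finset.sum_comm, Finset.sum_congr rfl hcol, Finset.sum_const, nsmul_eq_mul]
  have h3 : ∑ j ∈ O', b (i₀, j) = -∑ j ∈ O', b (j, i₀) := by
    rw [← Finset.sum_neg_distrib]
    exact Finset.sum_congr rfl fun j _ => by rw [hskew i₀ j]; ring
  rw [mul_comm, ← h2, h1, h3]; ring
end
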